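/- Fix vectors p₁,…,p₅, u₁,…,u₅ ∈ ℝ³. If (w, λ₁, λ₂, ρ₁,…,ρ₅, a, b, c, d, e) is a solution of the IOD system for the data (pᵢ, uᵢ), then so is (w, −λ₁, λ₂, ρ₁,…,ρ₅, a, b, −c, −d, e). -/

import Mathlib

/-- The cross product on `EuclideanSpace ℝ (Fin 3)`. -/
noncomputable def cross3 (x y : EuclideanSpace ℝ (Fin 3)) : EuclideanSpace ℝ (Fin 3) :=
  (EuclideanSpace.equiv (Fin 3) ℝ).symm
    ![x 1 * y 2 - x 2 * y 1, x 2 * y 0 - x 0 * y 2, x 0 * y 1 - x 1 * y 0]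

/-- The 15-equation polynomial system for angles-only initial orbit determination:
with `v₂ = λ₂ (w × u₁)`, `v₁ = λ₁ (v₂ × w)`, `rᵢ = pᵢ + ρᵢ uᵢ`, `xᵢ = ⟨rᵢ, v₁⟩`,
`yᵢ = ⟨rᵢ, v₂⟩`, the constraints are: `w`, `v₁`, `v₂` are unit vectors, each `rᵢ`
lies in the orbital plane, the five planar points lie on the normalized conic with
coefficients `(a,b,c,d,e)`, and the two focal polynomials vanish. -/
noncomputable def IsIODSolution (p u : Fin 5 → EuclideanSpace ℝ (Fin 3))
    (w : EuclideanSpace ℝ (Fin 3)) (l₁ l₂ : ℝ) (ρ : Fin 5 → ℝ)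
    (a b c d e : ℝ) : Prop :=
  let v₂ : EuclideanSpace ℝ (Fin 3) := l₂ • cross3 w (u 0)
  let v₁ : EuclideanSpace ℝ (Fin 3) := l₁ • cross3 v₂ w
  let r : Fin 5 → EuclideanSpace ℝ (Fin 3) := fun i => p i + ρ i • u i
  let x : Fin 5 → ℝ := fun i => (inner ℝ (r i) v₁ : ℝ)
  let y : Fin 5 → ℝ := fun i => (inner ℝ (r i) v₂ : ℝ)
  (inner ℝ w w : ℝ) = 1 ∧ (inner ℝ v₁ v₁ : ℝ) = 1 ∧ (inner ℝ v₂ v₂ : ℝ) = 1 ∧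
  (∀ i, (inner ℝ (r i) w : ℝ) = 0) ∧
  (∀ i, a * x i ^ 2 + b * y i ^ 2 + c * x i * y i + d * x i + e * y i + 1 = 0) ∧
  e ^ 2 - 4 * b - d ^ 2 + 4 * a = 0 ∧
  d * e - 2 * c = 0

/-! Negating `λ₁` negates `v₁` and hence every `xᵢ`, leaving `w`, `v₂`, `rᵢ`, `yᵢ` unchanged; the
conic and focal equations are invariant under `(xᵢ, c, d) ↦ (−xᵢ, −c, −d)`. -/

/-- Sign symmetry `(λ₁, c, d) ↦ (−λ₁, −c, −d)` of the IOD system. -/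
theorem iod_symmetry_lambda1 (p u : Fin 5 → EuclideanSpace ℝ (Fin 3))
    (w : EuclideanSpace ℝ (Fin 3)) (l₁ l₂ : ℝ) (ρ : Fin 5 → ℝ) (a b c d e : ℝ)
    (h : IsIODSolution p u w l₁ l₂ ρ a b c d e) :
    IsIODSolution p u w (-l₁) l₂ ρ a b (-c) (-d) e := by
  obtain ⟨hw, hv₁, hv₂, hplane, hconic, hfocal₁, hfocal₂⟩ := h
  refine ⟨hw, ?_, hv₂, hplane, fun i => ?_, by linear_combination hfocal₁,
    by linear_combination -hfocal₂⟩
  · simpa only [neg_smul, inner_neg_left, inner_neg_right, neg_neg] using hv₁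
  · simp only [neg_smul, inner_neg_right]
    linear_combination hconic i
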